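/- Let D be a finite database, q a conjunctive query, and f ∈ D a fact such that exactly one atom α of q can be matched to f (i.e., there is a homomorphism from the single-atom query α whose image is {f}, and no other atom of q admits such a homomorphism), and all such matchings of α to f agree on the assignment of variables. If q without α, with shared variables instantiated by this assignment, homomorphically maps into D, and the resulting minimal support S of the residual query contains no fact matching α, then S ∪ {f} is a minimal support of q containing f; hence f is relevant to q w.r.t. D. -/
import Mathlib


namespace CQ

variable {R V C : Type} [DecidableEq R] [DecidableEq V] [DecidableEq C]

/-- A term is a variable or a constant. -/
abbrev Term (V C : Type) := V ⊕ C

/-- An atom: a relation symbol applied to a tuple of terms. -/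
abbrev Atom (R V C : Type) := R × List (Term V C)

/-- A fact: a relation symbol applied to a tuple of constants. -/
abbrev Fact (R C : Type) := R × List C

/-- Evaluate a term under an assignment of variables to constants. -/
def evalT (h : V → C) : Term V C → C := Sum.elim h id

/-- Apply an assignment to an atom, producing a fact. -/
def applyA (h : V → C) (a : Atom R V C) : Fact R C := (a.1, a.2.map (evalT h))

/-- `h` is a homomorphism from the CQ `q` into the set of facts `S`. -/
def IsHom (h : V → C) (q : Finset (Atom R V C)) (S : Set (Fact R C)) : Prop :=
  ∀ a ∈ q, applyA h a ∈ S

/-- `S` is a support for `q` in `D`: `S ⊆ D` and `q` maps homomorphically into `S`. -/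
def Support (q : Finset (Atom R V C)) (D S : Finset (Fact R C)) : Prop :=
  S ⊆ D ∧ ∃ h : V → C, IsHom h q ↑S

/-- `S` is an inclusion-minimal support for `q` in `D`. -/
def MinSupport (q : Finset (Atom R V C)) (D S : Finset (Fact R C)) : Prop :=
  Support q D S ∧ ∀ S' ⊂ S, ¬ Support q D S'

/-- `f` is relevant to `q` w.r.t. `D`: it belongs to some minimal support. -/
def Relevant (q : Finset (Atom R V C)) (D : Finset (Fact R C)) (f : Fact R C) : Prop :=
  ∃ S, MinSupport q D S ∧ f ∈ S

end CQ

namespace CQ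

variable {R V C : Type} [DecidableEq R] [DecidableEq V] [DecidableEq C]

open Classical

/-- Instantiate a term: variables occurring in the atom `α` are replaced by
their value under `σ`; other terms are unchanged. -/
noncomputable def instT (σ : V → C) (α : Atom R V C) : Term V C → Term V C
  | Sum.inl x => @ite _ ((Sum.inl x : Term V C) ∈ α.2) (Classical.propDecidable _) (Sum.inr (σ x)) (Sum.inl x)
  | Sum.inr c => Sum.inr c

/-- The residual query `q₋α`: `q` with `α` removed and the variables of `α`
instantiated according to `σ`. -/
noncomputable def residual (q : Finset (Atom R V C)) (α : Atom R V C) (σ : V → C) :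
    Finset (Atom R V C) :=
  (q.erase α).image (fun b => (b.1, b.2.map (instT σ α)))

end CQ



namespace CQ

variable {R V C : Type}

theorem evalT_instT_of_agree (g σ : V → C) (α : Atom R V C)
    (hg : ∀ x, (Sum.inl x : Term V C) ∈ α.2 → g x = σ x) (t : Term V C) :
    evalT g (instT σ α t) = evalT g t := by
  cases t with
  | inl x =>
    simp only [instT]
    split
    · next hx => simpa [evalT] using (hg x hx).symm
    · rfl
  | inr c => rfl

theorem applyA_instT_of_agree (g σ : V → C) (α b : Atom R V C)
    (hg : ∀ x, (Sum.inl x : Term V C) ∈ α.2 → g x = σ x) :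
    applyA g (b.1, b.2.map (instT σ α)) = applyA g b := by
  unfold applyA
  simp only [List.map_map]
  exact congrArg _ (List.map_congr_left fun t _ => evalT_instT_of_agree g σ α hg t)

end CQ

open CQ in
/-- If exactly one atom `α` of `q` can be matched to `f`, all matchings of `α` to `f`
agree on the variables of `α`, the residual query has a minimal support `S` in `D`,
and `S` contains no fact matching `α`, then `S ∪ {f}` is a minimal support of `q`
containing `f`; hence `f` is relevant to `q` w.r.t. `D`. -/
theorem stmt9 {R V C : Type} [DecidableEq R] [DecidableEq V] [DecidableEq C]
    (q : Finset (Atom R V C)) (D : Finset (Fact R C)) (f : Fact R C) (hf : f ∈ D)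
    (α : Atom R V C) (hα : α ∈ q)
    (σ : V → C) (hmatch : applyA σ α = f)
    (huniq : ∀ β ∈ q, (∃ τ : V → C, applyA τ β = f) → β = α)
    (hagree : ∀ τ τ' : V → C, applyA τ α = f → applyA τ' α = f →
      ∀ x : V, (Sum.inl x : Term V C) ∈ α.2 → τ x = τ' x)
    (S : Finset (Fact R C)) (hS : MinSupport (residual q α σ) D S)
    (hnomatch : ∀ g ∈ S, ¬ ∃ τ : V → C, applyA τ α = g) :
    MinSupport q D (insert f S) ∧ Relevant q D f := by
  classical
  obtain ⟨⟨hSD, h, hhom⟩, hmin⟩ := hS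
  have hfS : f ∉ S := fun hf' => hnomatch f hf' ⟨σ, hmatch⟩
  set h' : V → C := fun x => evalT h (instT σ α (Sum.inl x)) with hh'
  have hh'σ : ∀ x, (Sum.inl x : Term V C) ∈ α.2 → h' x = σ x := by
    intro x hx
    show evalT h (instT σ α (Sum.inl x)) = σ x
    simp only [instT]
    rw [if_pos hx]
    rfl
  have hα' : applyA h' α = f := by
    rw [← hmatch]
    unfold applyA
    refine congrArg _ (List.map_congr_left fun t ht => ?_)
    cases t with
    | inl x => exact hh'σ x ht
    | inr c => rfl
  have hsup : Support q D (insert f S) := by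
    refine ⟨?_, h', ?_⟩
    · intro x hx
      rcases Finset.mem_insert.mp hx with rfl | hx
      · exact hf
      · exact hSD hx
    · intro b hb
      by_cases hbα : b = α
      · subst hbα; rw [hα']; exact Finset.mem_insert_self _ _
      · have hb' : (b.1, b.2.map (instT σ α)) ∈ residual q α σ :=
          Finset.mem_image_of_mem _ (Finset.mem_erase.mpr ⟨hbα, hb⟩)
        have hmem := hhom _ hb'
        have heq : applyA h (b.1, b.2.map (instT σ α)) = applyA h' b := by
          unfold applyA
          simp only [List.map_map]
          refine congrArg _ (List.map_congr_left fun t ht => ?_)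
          cases t with
          | inl x => rfl
          | inr c => rfl
        rw [heq] at hmem
        exact Finset.mem_insert_of_mem hmem
  have hminNew : ∀ S' ⊂ insert f S, ¬ Support q D S' := by
    rintro S' hS' ⟨hS'D, g, hg⟩
    have hgα : applyA g α = f := by
      have hmem := hS'.subset (hg α hα)
      rcases Finset.mem_insert.mp hmem with h1 | h1
      · exact h1
      · exact absurd ⟨g, rfl⟩ (hnomatch _ h1)
    have hfS' : f ∈ S' := hgα ▸ hg α hα
    have hgσ : ∀ x, (Sum.inl x : Term V C) ∈ α.2 → g x = σ x :=
      fun x hx => hagree g σ hgα hmatch x hx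
    have hres : IsHom g (residual q α σ) ↑(S'.erase f) := by
      intro b' hb'
      obtain ⟨b, hb, rfl⟩ := Finset.mem_image.mp hb'
      obtain ⟨hbα, hbq⟩ := Finset.mem_erase.mp hb
      rw [applyA_instT_of_agree g σ α b hgσ]
      have hne : applyA g b ≠ f := fun hbf => hbα (huniq b hbq ⟨g, hbf⟩)
      exact Finset.mem_coe.mpr (Finset.mem_erase.mpr ⟨hne, hg b hbq⟩)
    have hsub : S'.erase f ⊆ S := by
      intro x hx
      obtain ⟨hne, hx'⟩ := Finset.mem_erase.mp hx
      rcases Finset.mem_insert.mp (hS'.subset hx') with rfl | h1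
      · exact absurd rfl hne
      · exact h1
    have hne : S'.erase f ≠ S := by
      intro heq
      apply hS'.ne
      apply Finset.Subset.antisymm hS'.subset
      intro x hx
      rcases Finset.mem_insert.mp hx with rfl | h1
      · exact hfS'
      · rw [← heq] at h1; exact Finset.mem_of_mem_erase h1
    exact hmin _ (hsub.ssubset_of_ne hne) ⟨fun x hx => hSD (hsub hx), g, hres⟩
  exact ⟨⟨hsup, hminNew⟩, insert f S, ⟨hsup, hminNew⟩, Finset.mem_insert_self _ _⟩
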